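/- arXiv:1312.0755 — 2 statements merged into one kernel-verified Lean document; each statement's English description precedes it below -/
import Mathlib

section
/- Let T ∈ (0,∞], u : [0,T] → [0,∞) with ∫₀ᵀ u(t) dt < ∞, and φ : [0,∞) → [0,∞) continuous with φ(x) ≤ a x + b for nonnegative constants a, b. Then for each δ ≥ 0 the DBDE y_t = δ + ∫ₜᵀ u(s) φ(y_s) ds has a bounded continuous solution on [0,T]. -/
open MeasureTheory Filter
open scoped ENNReal

/-- The interval `[0,T]` where `T ∈ (0,∞]` (i.e. `[0,∞)` if `T = ∞`). -/
def dbInterval (T : ℝ≥0∞) : Set ℝ := {t : ℝ | 0 ≤ t ∧ ENNReal.ofReal t ≤ T}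

/-- The tail interval `[t,T]`. -/
def dbTail (T : ℝ≥0∞) (t : ℝ) : Set ℝ := {s : ℝ | t ≤ s ∧ ENNReal.ofReal s ≤ T}

/-!
Reparametrising time by the remaining mass `v = ∫ₜᵀ u`, the equation becomes the autonomous
integral equation `g v = δ + ∫₀ᵛ φ (g w) dw` on `[0, ∫ u]`, and `y t = g (∫ₜᵀ u)`. The change of
variables holds for merely integrable `u` because `t ↦ ∫₀^{∫ₜᵀ u} φ ∘ g` is absolutely continuous,
so the fundamental theorem of calculus applies to it.

The autonomous equation is solved by separation of variables: `g` inverts the travel time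
`x ↦ ∫_δ^x 1/φ` until it reaches the first zero of `φ` above `δ`, where it stops. To make sure such
a zero exists, `φ` is first cut off above the Grönwall bound for `g` that linear growth provides;
below that bound the cut-off changes nothing.
-/

open Set
open scoped NNReal

theorem LipschitzOnWith.comp_absolutelyContinuousOnInterval {X Y : Type*} [PseudoMetricSpace X]
    [PseudoMetricSpace Y] {g : X → Y} {K : ℝ≥0} {s : Set X} {f : ℝ → X} {a b : ℝ}
    (hg : LipschitzOnWith K g s) (hf : AbsolutelyContinuousOnInterval f a b)
    (hfs : MapsTo f (uIcc a b) s) : AbsolutelyContinuousOnInterval (g ∘ f) a b := by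
  have hlim := Tendsto.const_mul (K : ℝ) hf
  rw [mul_zero] at hlim
  refine squeeze_zero' (Eventually.of_forall fun _ ↦ Finset.sum_nonneg fun _ _ ↦ dist_nonneg)
    ?_ hlim
  filter_upwards [mem_inf_of_right (mem_principal_self _)] with E hE
  rw [Finset.mul_sum]
  exact Finset.sum_le_sum fun i hi ↦ hg.dist_le_mul _ (hfs (hE.1 i hi).1) _ (hfs (hE.1 i hi).2)

theorem LocallyLipschitz.comp_absolutelyContinuousOnInterval {F Y : Type*}
    [SeminormedAddCommGroup F] [PseudoMetricSpace Y] {g : F → Y} {f : ℝ → F} {a b : ℝ}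
    (hg : LocallyLipschitz g) (hf : AbsolutelyContinuousOnInterval f a b) :
    AbsolutelyContinuousOnInterval (g ∘ f) a b := by
  obtain ⟨K, hK⟩ := hg.locallyLipschitzOn.exists_lipschitzOnWith_of_compact
    (isCompact_uIcc.image_of_continuousOn hf.continuousOn)
  exact hK.comp_absolutelyContinuousOnInterval hf (mapsTo_image f _)

theorem Continuous.contDiff_primitive {h : ℝ → ℝ} (hh : Continuous h) (a : ℝ) :
    ContDiff ℝ 1 (fun w ↦ ∫ x in a..w, h x) :=
  contDiff_one_iff_deriv.2
    ⟨fun w ↦ (hh.integral_hasStrictDerivAt a w).hasDerivAt.differentiableAt,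
      by simpa only [funext (Continuous.deriv_integral h hh a)] using hh⟩

theorem Monotone.continuous_of_Ioo_subset_range {f : ℝ → ℝ} (hf : Monotone f) {a b : ℝ}
    (h₁ : Ioo a b ⊆ range f) (h₂ : range f ⊆ Icc a b) : Continuous f := by
  rcases eq_or_lt_of_le (show a ≤ b from (h₂ ⟨0, rfl⟩).1.trans (h₂ ⟨0, rfl⟩).2) with rfl | hab
  · simpa [funext fun x ↦ Icc_self a ▸ h₂ ⟨x, rfl⟩] using continuous_const
  set g : ℝ → Icc a b := codRestrict f _ fun x ↦ h₂ ⟨x, rfl⟩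
  have hg : Monotone g := fun x y hxy ↦ hf hxy
  refine continuous_subtype_val.comp (hg.continuous_of_denseRange ?_)
  rw [DenseRange, Subtype.dense_iff]
  refine (closure_Ioo hab.ne).symm.subset.trans (closure_mono fun y hy ↦ ?_)
  obtain ⟨x, rfl⟩ := h₁ hy
  exact ⟨g x, mem_range_self x, rfl⟩

section TailIntegral

variable {u h : ℝ → ℝ}

theorem continuous_integral_Ioi (hu : Integrable u) : Continuous fun s ↦ ∫ x in Ioi s, u x := by
  have h0 : ∀ s, ∫ x in Ioi s, u x = (∫ x in Ioi 0, u x) - ∫ x in 0..s, u x := fun s ↦ by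
    rw [← intervalIntegral.integral_Ioi_sub_Ioi' hu.integrableOn hu.integrableOn]; ring
  exact (continuous_const.sub (hu.continuous_primitive 0)).congr fun s ↦ (h0 s).symm

theorem intervalIntegral_mul_comp_integral_Ioi (hu : Integrable u) (hh : Continuous h) (c d : ℝ) :
    ∫ s in c..d, u s * h (∫ x in Ioi s, u x) =
      ∫ w in (∫ x in Ioi d, u x)..(∫ x in Ioi c, u x), h w := by
  set F : ℝ → ℝ := fun s ↦ ∫ x in Ioi s, u x
  set H : ℝ → ℝ := fun w ↦ ∫ x in 0..w, h x
  have hF : ∀ s, F s = F c - ∫ x in c..s, u x := fun s ↦ by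
    rw [← intervalIntegral.integral_Ioi_sub_Ioi' hu.integrableOn hu.integrableOn]; ring
  have hAC : AbsolutelyContinuousOnInterval (H ∘ F) c d := by
    have hP := hu.intervalIntegrable.absolutelyContinuousOnInterval_intervalIntegral
      (left_mem_uIcc (a := c) (b := d))
    have hL : LocallyLipschitz fun w ↦ H (F c - w) :=
      ((hh.contDiff_primitive 0).comp (contDiff_const.sub contDiff_id)).locallyLipschitz
    have hcomp : H ∘ F = (fun w ↦ H (F c - w)) ∘ fun s ↦ ∫ x in c..s, u x :=
      funext fun s ↦ congrArg H (hF s)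
    exact hcomp ▸ hL.comp_absolutelyContinuousOnInterval hP
  have hderiv : ∀ᵐ x, HasDerivAt (H ∘ F) (-(u x * h (F x))) x := by
    filter_upwards [LocallyIntegrable.ae_hasDerivAt_integral hu.locallyIntegrable] with x hx
    have hFx : HasDerivAt F (-u x) x := by
      simpa only [← hF, zero_sub] using (hx c).const_sub (F c)
    exact ((hh.integral_hasStrictDerivAt 0 (F x)).hasDerivAt.comp x hFx).congr_deriv (by ring)
  have hFTC := hAC.integral_deriv_eq_sub
  rw [intervalIntegral.integral_congr_ae (hderiv.mono fun x hx _ ↦ hx.deriv),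
    intervalIntegral.integral_neg] at hFTC
  rw [← intervalIntegral.integral_interval_sub_left (hh.intervalIntegrable 0 _)
    (hh.intervalIntegrable 0 _)]
  simp only [Function.comp_apply] at hFTC
  linarith

theorem integral_Ioi_mul_comp_integral_Ioi (hu : Integrable u) (hh : Continuous h) (c : ℝ) :
    ∫ s in Ioi c, u s * h (∫ x in Ioi s, u x) = ∫ w in 0..(∫ x in Ioi c, u x), h w := by
  set F : ℝ → ℝ := fun s ↦ ∫ x in Ioi s, u x
  obtain ⟨C, hC⟩ := (isCompact_closedBall (0 : ℝ) (∫ x, ‖u x‖)).exists_bound_of_continuousOn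
    hh.continuousOn
  have hF_mem : ∀ s, F s ∈ Metric.closedBall 0 (∫ x, ‖u x‖) := fun s ↦ by
    rw [mem_closedBall_zero_iff]
    exact (norm_integral_le_integral_norm _).trans
      (setIntegral_le_integral hu.norm (Eventually.of_forall fun _ ↦ norm_nonneg _))
  have hint : Integrable fun s ↦ u s * h (F s) :=
    hu.mul_bdd (hh.comp (continuous_integral_Ioi hu)).aestronglyMeasurable
      (Eventually.of_forall fun s ↦ hC _ (hF_mem s))
  have hH : Continuous fun w ↦ ∫ x in w..F c, h x := by
    simpa only [intervalIntegral.integral_symm (F c)] using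
      (hh.contDiff_primitive (F c)).neg.continuous
  have hlim := (intervalIntegral_tendsto_integral_Ioi c hint.integrableOn tendsto_id).congr
    fun d ↦ intervalIntegral_mul_comp_integral_Ioi hu hh c d
  exact tendsto_nhds_unique hlim ((hH.tendsto 0).comp (tendsto_integral_Ioi_zero tendsto_id))

end TailIntegral

section SeparationOfVariables

variable {φ : ℝ → ℝ} {δ x₁ : ℝ}

noncomputable def travelTime (φ : ℝ → ℝ) (δ x : ℝ) : ℝ := ∫ w in δ..x, (φ w)⁻¹

@[simp]
theorem travelTime_self (φ : ℝ → ℝ) (δ : ℝ) : travelTime φ δ δ = 0 :=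
  intervalIntegral.integral_same

theorem hasDerivAt_travelTime (hφ : Continuous φ) (hpos : ∀ x ∈ Ico δ x₁, 0 < φ x) {x : ℝ}
    (hx : x ∈ Ico δ x₁) : HasDerivAt (travelTime φ δ) (φ x)⁻¹ x := by
  have hcont : ∀ y ∈ Ico δ x₁, ContinuousAt (fun w ↦ (φ w)⁻¹) y :=
    fun y hy ↦ hφ.continuousAt.inv₀ (hpos y hy).ne'
  refine intervalIntegral.integral_hasDerivAt_right (ContinuousOn.intervalIntegrable ?_)
    (hφ.measurable.inv.stronglyMeasurable.stronglyMeasurableAtFilter) (hcont x hx)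
  rw [uIcc_of_le hx.1]
  exact fun y hy ↦ (hcont y ⟨hy.1, hy.2.trans_lt hx.2⟩).continuousWithinAt

theorem continuousOn_travelTime (hφ : Continuous φ) (hpos : ∀ x ∈ Ico δ x₁, 0 < φ x) :
    ContinuousOn (travelTime φ δ) (Ico δ x₁) :=
  fun _ hx ↦ (hasDerivAt_travelTime hφ hpos hx).continuousAt.continuousWithinAt

theorem strictMonoOn_travelTime (hφ : Continuous φ) (hpos : ∀ x ∈ Ico δ x₁, 0 < φ x) :
    StrictMonoOn (travelTime φ δ) (Ico δ x₁) :=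
  strictMonoOn_of_hasDerivWithinAt_pos (convex_Ico δ x₁) (continuousOn_travelTime hφ hpos)
    (fun _ hx ↦ (hasDerivAt_travelTime hφ hpos (interior_subset hx)).hasDerivWithinAt)
    (fun x hx ↦ inv_pos.2 (hpos x (interior_subset hx)))

/-- Generalized inverse of `travelTime φ δ` on `[δ, x₁)`: it equals `δ` at negative times and `x₁`
once `x₁` has been reached. -/
noncomputable def autonomousFlow (φ : ℝ → ℝ) (δ x₁ v : ℝ) : ℝ :=
  sSup {x | x ≤ δ ∨ x < x₁ ∧ travelTime φ δ x ≤ v}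

theorem bddAbove_autonomousFlow_set (hδ : δ ≤ x₁) (v : ℝ) :
    BddAbove {x | x ≤ δ ∨ x < x₁ ∧ travelTime φ δ x ≤ v} :=
  ⟨x₁, by rintro x (hx | hx); exacts [hx.trans hδ, hx.1.le]⟩

theorem le_autonomousFlow (hδ : δ ≤ x₁) (v : ℝ) : δ ≤ autonomousFlow φ δ x₁ v :=
  le_csSup (bddAbove_autonomousFlow_set hδ v) (Or.inl le_rfl)

theorem autonomousFlow_le (hδ : δ ≤ x₁) (v : ℝ) : autonomousFlow φ δ x₁ v ≤ x₁ :=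
  csSup_le ⟨δ, Or.inl le_rfl⟩ (by rintro x (hx | hx); exacts [hx.trans hδ, hx.1.le])

theorem monotone_autonomousFlow (hδ : δ ≤ x₁) : Monotone (autonomousFlow φ δ x₁) :=
  fun _ _ hvw ↦ csSup_le_csSup (bddAbove_autonomousFlow_set hδ _) ⟨δ, Or.inl le_rfl⟩
    fun _ hx ↦ hx.imp_right fun hx ↦ ⟨hx.1, hx.2.trans hvw⟩

theorem autonomousFlow_travelTime (hφ : Continuous φ) (hpos : ∀ x ∈ Ico δ x₁, 0 < φ x)
    {x : ℝ} (hx : x ∈ Ico δ x₁) : autonomousFlow φ δ x₁ (travelTime φ δ x) = x := by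
  refine le_antisymm (csSup_le ⟨δ, Or.inl le_rfl⟩ ?_)
    (le_csSup (bddAbove_autonomousFlow_set (hx.1.trans hx.2.le) _) (Or.inr ⟨hx.2, le_rfl⟩))
  rintro y (hy | ⟨hy, hτ⟩)
  · exact hy.trans hx.1
  · by_contra! hxy
    exact hτ.not_gt
      ((strictMonoOn_travelTime hφ hpos).lt_iff_lt hx ⟨hx.1.trans hxy.le, hy⟩ |>.2 hxy)

theorem travelTime_autonomousFlow (hφ : Continuous φ) (hpos : ∀ x ∈ Ico δ x₁, 0 < φ x)
    (hδ : δ < x₁) {v : ℝ} (hv : 0 ≤ v) (hlt : autonomousFlow φ δ x₁ v < x₁) :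
    travelTime φ δ (autonomousFlow φ δ x₁ v) = v := by
  obtain ⟨x, hx, hvx⟩ : ∃ x ∈ Ico δ x₁, v < travelTime φ δ x := by
    by_contra! h
    refine hlt.not_ge ((csSup_Ico hδ).symm.trans_le ?_)
    exact csSup_le_csSup (bddAbove_autonomousFlow_set hδ.le v) (nonempty_Ico.2 hδ)
      fun x hx ↦ Or.inr ⟨hx.2, h x hx⟩
  obtain ⟨x₀, hx₀, rfl⟩ := intermediate_value_Icc hx.1
    ((continuousOn_travelTime hφ hpos).mono fun y hy ↦ ⟨hy.1, hy.2.trans_lt hx.2⟩)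
    ⟨travelTime_self φ δ ▸ hv, hvx.le⟩
  rw [autonomousFlow_travelTime hφ hpos ⟨hx₀.1, hx₀.2.trans_lt hx.2⟩]

theorem continuous_autonomousFlow (hφ : Continuous φ) (hpos : ∀ x ∈ Ico δ x₁, 0 < φ x)
    (hδ : δ < x₁) : Continuous (autonomousFlow φ δ x₁) :=
  (monotone_autonomousFlow hδ.le).continuous_of_Ioo_subset_range
    (fun x hx ↦ ⟨_, autonomousFlow_travelTime hφ hpos ⟨hx.1.le, hx.2⟩⟩)
    (by rintro _ ⟨v, rfl⟩; exact ⟨le_autonomousFlow hδ.le v, autonomousFlow_le hδ.le v⟩)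

theorem autonomousFlow_eq_of_lt (hφ : Continuous φ) (hpos : ∀ x ∈ Ico δ x₁, 0 < φ x)
    (hδ : δ < x₁) {v : ℝ} (hv : 0 ≤ v) (hlt : autonomousFlow φ δ x₁ v < x₁) :
    autonomousFlow φ δ x₁ v = δ + ∫ w in 0..v, φ (autonomousFlow φ δ x₁ w) := by
  set g := autonomousFlow φ δ x₁
  have hsub : uIcc δ (g v) ⊆ Ico δ x₁ := by
    rw [uIcc_of_le (le_autonomousFlow hδ.le v)]
    exact fun x hx ↦ ⟨hx.1, hx.2.trans_lt hlt⟩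
  have hcov := intervalIntegral.integral_comp_mul_deriv (g := fun w ↦ φ (g w))
    (fun x hx ↦ hasDerivAt_travelTime hφ hpos (hsub hx))
    (fun x hx ↦ (hφ.continuousAt.inv₀ (hpos x (hsub hx)).ne').continuousWithinAt)
    (hφ.comp (continuous_autonomousFlow hφ hpos hδ))
  rw [travelTime_autonomousFlow hφ hpos hδ hv hlt, travelTime_self] at hcov
  rw [← hcov, intervalIntegral.integral_congr (g := fun _ ↦ 1), intervalIntegral.integral_const]
  · simp
  · intro x hx
    have hgx : g (travelTime φ δ x) = x := autonomousFlow_travelTime hφ hpos (hsub hx)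
    simp only [Function.comp_apply, hgx]
    exact mul_inv_cancel₀ (hpos x (hsub hx)).ne'

theorem autonomousFlow_eq (hφ : Continuous φ) (hpos : ∀ x ∈ Ico δ x₁, 0 < φ x) (hδ : δ < x₁)
    (hz : φ x₁ = 0) {v : ℝ} (hv : 0 ≤ v) :
    autonomousFlow φ δ x₁ v = δ + ∫ w in 0..v, φ (autonomousFlow φ δ x₁ w) := by
  rcases (autonomousFlow_le hδ.le v).lt_or_eq with hlt | hv₁
  · exact autonomousFlow_eq_of_lt hφ hpos hδ hv hlt
  set g := autonomousFlow φ δ x₁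
  have hg : Continuous g := continuous_autonomousFlow hφ hpos hδ
  have hmono : Monotone g := monotone_autonomousFlow hδ.le
  have hle : ∀ w, g w ≤ x₁ := autonomousFlow_le hδ.le
  have hφg : Continuous fun w ↦ φ (g w) := hφ.comp hg
  have hg0 : g 0 = δ := by simpa using autonomousFlow_travelTime hφ hpos ⟨le_rfl, hδ⟩
  have hS : IsClosed (g ⁻¹' {x₁}) := isClosed_singleton.preimage hg
  have hlb : ∀ w ∈ g ⁻¹' {x₁}, 0 < w := fun w hw ↦ by
    by_contra! hw0
    exact hδ.not_ge (hg0 ▸ hw ▸ hmono hw0)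
  have hbdd : BddBelow (g ⁻¹' {x₁}) := ⟨0, fun w hw ↦ (hlb w hw).le⟩
  set v₀ := sInf (g ⁻¹' {x₁})
  have hv₀ : g v₀ = x₁ := hS.csInf_mem ⟨v, hv₁⟩ hbdd
  have heq₀ : g v₀ = δ + ∫ w in 0..v₀, φ (g w) := by
    have hE : IsClosed {t | g t = δ + ∫ w in 0..t, φ (g w)} :=
      isClosed_eq hg (continuous_const.add (hφg.contDiff_primitive 0).continuous)
    have hIco : Ico 0 v₀ ⊆ {t | g t = δ + ∫ w in 0..t, φ (g w)} := fun t ht ↦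
      autonomousFlow_eq_of_lt hφ hpos hδ ht.1
        ((hle t).lt_of_ne fun h ↦ notMem_of_lt_csInf ht.2 hbdd h)
    have h0v₀ : 0 < v₀ := hlb v₀ hv₀
    refine hE.closure_subset_iff.2 hIco ?_
    rw [closure_Ico h0v₀.ne]
    exact right_mem_Icc.2 h0v₀.le
  have hconst : ∀ w ∈ uIcc v₀ v, φ (g w) = 0 := by
    intro w hw
    rw [uIcc_of_le (csInf_le hbdd hv₁)] at hw
    rw [le_antisymm (hle w) (hv₀ ▸ hmono hw.1), hz]
  rw [← intervalIntegral.integral_add_adjacent_intervals (b := v₀)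
    (hφg.intervalIntegrable _ _) (hφg.intervalIntegrable _ _),
    intervalIntegral.integral_congr hconst, intervalIntegral.integral_zero, add_zero, ← heq₀, hv₀,
    hv₁]

end SeparationOfVariables

theorem exists_autonomous_solution_of_zero {φ : ℝ → ℝ} (hφ : Continuous φ) (hφ0 : ∀ x, 0 ≤ φ x)
    {δ z : ℝ} (hδz : δ ≤ z) (hz : φ z = 0) :
    ∃ g : ℝ → ℝ, Continuous g ∧ (∀ v, δ ≤ g v) ∧
      ∀ v, 0 ≤ v → g v = δ + ∫ w in 0..v, φ (g w) := by
  by_cases hδ0 : φ δ = 0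
  · exact ⟨fun _ ↦ δ, continuous_const, fun _ ↦ le_rfl, fun v _ ↦ by simp [hδ0]⟩
  obtain ⟨x₁, ⟨⟨hδx₁, -⟩, hx₁⟩, hmin⟩ := (isCompact_Icc.inter_right
    (isClosed_singleton.preimage hφ)).exists_isLeast ⟨z, ⟨hδz, le_rfl⟩, hz⟩
  have hδ : δ < x₁ := hδx₁.lt_of_ne fun h ↦ hδ0 (h ▸ hx₁)
  have hpos : ∀ x ∈ Ico δ x₁, 0 < φ x := fun x hx ↦ (hφ0 x).lt_of_ne' fun h ↦
    hx.2.not_ge (hmin ⟨⟨hx.1, hx.2.le.trans (hmin ⟨⟨hδz, le_rfl⟩, hz⟩)⟩, h⟩)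
  exact ⟨autonomousFlow φ δ x₁, continuous_autonomousFlow hφ hpos hδ,
    le_autonomousFlow hδ.le, fun v hv ↦ autonomousFlow_eq hφ hpos hδ hx₁ hv⟩

theorem norm_le_gronwallBound_of_eq_integral {E : Type*} [NormedAddCommGroup E]
    [NormedSpace ℝ E] [CompleteSpace E] {g ψ : ℝ → E} {δ : E} {K ε V : ℝ} (hψ : Continuous ψ)
    (heq : ∀ v ∈ Icc 0 V, g v = δ + ∫ w in 0..v, ψ w)
    (bound : ∀ v ∈ Ico 0 V, ‖ψ v‖ ≤ K * ‖g v‖ + ε) :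
    ∀ v ∈ Icc 0 V, ‖g v‖ ≤ gronwallBound ‖δ‖ K ε v := by
  have hderiv : ∀ v, HasDerivAt (fun v ↦ δ + ∫ w in 0..v, ψ w) (ψ v) v :=
    fun v ↦ (hψ.integral_hasStrictDerivAt 0 v).hasDerivAt.const_add δ
  intro v hv
  simpa [← heq v hv] using norm_le_gronwallBound_of_norm_deriv_right_le
    (fun v _ ↦ (hderiv v).continuousAt.continuousWithinAt)
    (fun v _ ↦ (hderiv v).hasDerivWithinAt)
    (by simp) (fun v hv ↦ heq v (Ico_subset_Icc_self hv) ▸ bound v hv) v hv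

theorem exists_autonomous_solution_of_linear_growth {φ : ℝ → ℝ} (hφ : Continuous φ)
    (hφ0 : ∀ x, 0 ≤ φ x) {a b : ℝ} (ha : 0 ≤ a) (hb : 0 ≤ b)
    (hgrowth : ∀ x, 0 ≤ x → φ x ≤ a * x + b) {δ : ℝ} (hδ : 0 ≤ δ) (V : ℝ) :
    ∃ g : ℝ → ℝ, Continuous g ∧ (∀ v, δ ≤ g v) ∧
      ∀ v ∈ Icc 0 V, g v = δ + ∫ w in 0..v, φ (g w) := by
  set B := gronwallBound δ a b V
  -- cut `φ` off above the a priori bound `B`, so that it acquires a zero above `δ`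
  set c : ℝ → ℝ := fun x ↦ max 0 (min 1 (B + 1 - x))
  have hc : ∀ x, 0 ≤ c x ∧ c x ≤ 1 := fun x ↦
    ⟨le_max_left _ _, max_le zero_le_one (min_le_left _ _)⟩
  have hcB : ∀ x ≤ B, c x = 1 := fun x hx ↦ by simp only [c]; rw [min_eq_left (by linarith)]; simp
  have hφc : ∀ x, 0 ≤ x → φ x * c x ≤ a * x + b := fun x hx ↦
    (mul_le_of_le_one_right (hφ0 x) (hc x).2).trans (hgrowth x hx)
  have hφc_cont : Continuous fun x ↦ φ x * c x := hφ.mul (by fun_prop)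
  obtain ⟨g, hg, hδg, heq⟩ := exists_autonomous_solution_of_zero hφc_cont
    (fun x ↦ mul_nonneg (hφ0 x) (hc x).1) (le_max_left δ (B + 1))
    (by simp only [c]; rw [min_eq_right (by linarith [le_max_right δ (B + 1)])]; simp)
  have hgB : ∀ v ∈ Icc 0 V, g v ≤ B := fun v hv ↦ by
    have hg0 : ∀ w, 0 ≤ g w := fun w ↦ hδ.trans (hδg w)
    have := norm_le_gronwallBound_of_eq_integral (ψ := fun w ↦ φ (g w) * c (g w))
      (hφc_cont.comp hg)
      (fun v hv ↦ heq v hv.1) (fun w _ ↦ by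
        rw [Real.norm_of_nonneg (hg0 w), Real.norm_of_nonneg (mul_nonneg (hφ0 _) (hc _).1)]
        exact hφc _ (hg0 w)) v hv
    rw [Real.norm_of_nonneg (hg0 v), Real.norm_of_nonneg hδ] at this
    exact this.trans (gronwallBound_mono hδ hb ha hv.2)
  refine ⟨g, hg, hδg, fun v hv ↦ (heq v hv.1).trans ?_⟩
  congr 1
  refine intervalIntegral.integral_congr fun w hw ↦ ?_
  rw [uIcc_of_le hv.1] at hw
  simp only [hcB _ (hgB w ⟨hw.1, hw.2.trans hv.2⟩), mul_one]

theorem measurableSet_dbInterval (T : ℝ≥0∞) : MeasurableSet (dbInterval T) :=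
  measurableSet_Ici.inter (ENNReal.measurable_ofReal measurableSet_Iic)

theorem setIntegral_dbTail {T : ℝ≥0∞} {t : ℝ} (ht : t ∈ dbInterval T) (f : ℝ → ℝ) :
    ∫ s in dbTail T t, f s = ∫ s in Ioi t, (dbInterval T).indicator f s := by
  have hTail : dbTail T t = Ici t ∩ dbInterval T := by
    ext s
    exact ⟨fun hs ↦ ⟨hs.1, ht.1.trans hs.1, hs.2⟩, fun hs ↦ ⟨hs.1, hs.2.2⟩⟩
  rw [← integral_Ici_eq_integral_Ioi, setIntegral_indicator (measurableSet_dbInterval T), hTail]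

theorem stmt_8_general (T : ℝ≥0∞) (u : ℝ → ℝ) (φ : ℝ → ℝ) (a b : ℝ)
    (hu0 : ∀ t ∈ dbInterval T, 0 ≤ u t)
    (huInt : IntegrableOn u (dbInterval T))
    (hφc : ContinuousOn φ (Set.Ici 0))
    (hφ0 : ∀ x : ℝ, 0 ≤ x → 0 ≤ φ x)
    (ha : 0 ≤ a) (hb : 0 ≤ b)
    (hφgrowth : ∀ x : ℝ, 0 ≤ x → φ x ≤ a * x + b)
    (δ : ℝ) (hδ : 0 ≤ δ) :
    ∃ y : ℝ → ℝ, ContinuousOn y (dbInterval T) ∧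
      (∃ M : ℝ, ∀ t ∈ dbInterval T, |y t| ≤ M) ∧
      ∀ t ∈ dbInterval T, 0 ≤ y t ∧ y t = δ + ∫ s in dbTail T t, u s * φ (y s) := by
  set u' := (dbInterval T).indicator u
  have hu' : Integrable u' := (integrable_indicator_iff (measurableSet_dbInterval T)).2 huInt
  have hu'0 : ∀ s, 0 ≤ u' s := indicator_nonneg hu0
  set φ' : ℝ → ℝ := fun x ↦ φ (max x 0)
  have hφ' : Continuous φ' :=
    hφc.comp_continuous (continuous_id.max continuous_const) fun x ↦ le_max_right x 0
  obtain ⟨g, hg, hδg, heq⟩ := exists_autonomous_solution_of_linear_growth hφ'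
    (fun x ↦ hφ0 _ (le_max_right x 0)) ha hb
    (fun x hx ↦ by simpa only [φ', max_eq_left hx] using hφgrowth x hx) hδ (∫ x, u' x)
  have hF : ∀ t, ∫ x in Ioi t, u' x ∈ Icc 0 (∫ x, u' x) := fun t ↦
    ⟨setIntegral_nonneg measurableSet_Ioi fun x _ ↦ hu'0 x,
      setIntegral_le_integral hu' (Eventually.of_forall hu'0)⟩
  obtain ⟨M, hM⟩ := isCompact_Icc.exists_bound_of_continuousOn hg.continuousOn
  refine ⟨fun t ↦ g (∫ x in Ioi t, u' x), (hg.comp (continuous_integral_Ioi hu')).continuousOn,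
    ⟨M, fun t _ ↦ hM _ (hF t)⟩, fun t ht ↦ ⟨hδ.trans (hδg _), ?_⟩⟩
  dsimp only
  rw [heq _ (hF t), setIntegral_dbTail ht,
    ← integral_Ioi_mul_comp_integral_Ioi hu' (h := fun w ↦ φ' (g w)) (hφ'.comp hg) t]
  congr 1
  refine setIntegral_congr_fun measurableSet_Ioi fun s _ ↦ ?_
  by_cases hs : s ∈ dbInterval T
  · simp [u', hs, φ', max_eq_left (hδ.trans (hδg _))]
  · simp [u', hs]

theorem stmt_8 (T : ℝ≥0∞) (hT : 0 < T) (u : ℝ → ℝ) (φ : ℝ → ℝ) (a b : ℝ)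
    (hu0 : ∀ t ∈ dbInterval T, 0 ≤ u t)
    (huInt : IntegrableOn u (dbInterval T))
    (hφc : ContinuousOn φ (Set.Ici 0))
    (hφ0 : ∀ x : ℝ, 0 ≤ x → 0 ≤ φ x)
    (ha : 0 ≤ a) (hb : 0 ≤ b)
    (hφgrowth : ∀ x : ℝ, 0 ≤ x → φ x ≤ a * x + b)
    (δ : ℝ) (hδ : 0 ≤ δ) :
    ∃ y : ℝ → ℝ, ContinuousOn y (dbInterval T) ∧
      (∃ M : ℝ, ∀ t ∈ dbInterval T, |y t| ≤ M) ∧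
      ∀ t ∈ dbInterval T, 0 ≤ y t ∧ y t = δ + ∫ s in dbTail T t, u s * φ (y s) :=
  stmt_8_general T u φ a b hu0 huInt hφc hφ0 ha hb hφgrowth δ hδ
end

section
/- Inf-convolution approximation of a uniformly continuous generator: let g : [0,T] × ℝ → ℝ satisfy |g(t,y₁) − g(t,y₂)| ≤ u(t) ρ(|y₁ − y₂|), where u(t) > 0, ρ is nondecreasing, continuous, ρ(0)=0, and ρ(x) ≤ A(1+x). For n ∈ ℕ define gⁿ(t,y) = inf_{p ∈ ℝ} { g(t,p) + (n+A) u(t) |p − y| }. Then gⁿ is well-defined, gⁿ(t,y) ≤ g(t,y), |gⁿ(t,y₁) − gⁿ(t,y₂)| ≤ (n+A) u(t) |y₁ − y₂|, and |gⁿ(t,y₁) − gⁿ(t,y₂)| ≤ u(t) ρ(|y₁ − y₂|) for all t, y₁, y₂. -/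
/-!
The inf-convolution `y ↦ ⨅ p, f p + L ‖p - y‖` of `f` with the cone `L ‖·‖` is an infimum of
`L`-Lipschitz functions of `y`, hence `L`-Lipschitz as soon as it is finite. Finiteness comes from
the linear growth of the modulus: `f p ≥ f y - c A - c A ‖p - y‖`, and `c A ≤ L`. Translating the
variable of the infimum by `z - w` shows that any modulus of continuity of `f` is inherited.
-/

open MeasureTheory Filter
open scoped ENNReal

section InfConv

variable {E : Type*} [SeminormedAddCommGroup E]

noncomputable def infConv (f : E → ℝ) (L : ℝ) (y : E) : ℝ :=
  ⨅ p, f p + L * ‖p - y‖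

lemma sub_mul_norm_le_of_modulus_le_linear {f : E → ℝ} {ρ : ℝ → ℝ} {c A : ℝ} (hc : 0 ≤ c)
    (hρ : ∀ x, 0 ≤ x → ρ x ≤ A * (1 + x)) (hf : ∀ x y, |f x - f y| ≤ c * ρ ‖x - y‖)
    (y p : E) : f y - c * A - c * A * ‖p - y‖ ≤ f p := by
  have hdiff := le_of_abs_le (hf y p)
  rw [norm_sub_rev] at hdiff
  have hgrowth : c * ρ ‖p - y‖ ≤ c * (A * (1 + ‖p - y‖)) :=
    mul_le_mul_of_nonneg_left (hρ _ (norm_nonneg _)) hc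
  linarith

lemma bddBelow_range_add_mul_norm_sub {f : E → ℝ} {a K L : ℝ} {y : E} (hKL : K ≤ L)
    (hf : ∀ p, f y - a - K * ‖p - y‖ ≤ f p) :
    BddBelow (Set.range fun p => f p + L * ‖p - y‖) := by
  refine ⟨f y - a, ?_⟩
  rintro _ ⟨p, rfl⟩
  nlinarith [hf p, norm_nonneg (p - y)]

lemma infConv_le_self {f : E → ℝ} {L : ℝ} {y : E}
    (hbdd : BddBelow (Set.range fun p => f p + L * ‖p - y‖)) : infConv f L y ≤ f y := by
  simpa [infConv] using ciInf_le hbdd y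

lemma infConv_le_add_mul_norm_sub {f : E → ℝ} {L : ℝ} (hL : 0 ≤ L) {z : E}
    (hbdd : BddBelow (Set.range fun p => f p + L * ‖p - z‖)) (w : E) :
    infConv f L z ≤ infConv f L w + L * ‖z - w‖ := by
  rw [← sub_le_iff_le_add]
  refine le_ciInf fun p => sub_le_iff_le_add.2 ?_
  calc infConv f L z ≤ f p + L * ‖p - z‖ := ciInf_le hbdd p
    _ ≤ f p + L * (‖p - w‖ + ‖z - w‖) := by
        gcongr
        simpa only [norm_sub_rev z w] using norm_sub_le_norm_sub_add_norm_sub p w z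
    _ = f p + L * ‖p - w‖ + L * ‖z - w‖ := by ring

lemma infConv_le_add_of_modulus {f : E → ℝ} {L : ℝ} {ω : ℝ → ℝ}
    (hf : ∀ x y, |f x - f y| ≤ ω ‖x - y‖) {z : E}
    (hbdd : BddBelow (Set.range fun p => f p + L * ‖p - z‖)) (w : E) :
    infConv f L z ≤ infConv f L w + ω ‖z - w‖ := by
  rw [← sub_le_iff_le_add]
  refine le_ciInf fun p => sub_le_iff_le_add.2 ?_
  have htranslate : f (p + (z - w)) ≤ f p + ω ‖z - w‖ := by
    have h := le_of_abs_le (hf (p + (z - w)) p)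
    rwa [add_sub_cancel_left, sub_le_iff_le_add'] at h
  calc infConv f L z ≤ f (p + (z - w)) + L * ‖p + (z - w) - z‖ := ciInf_le hbdd _
    _ = f (p + (z - w)) + L * ‖p - w‖ := by rw [show p + (z - w) - z = p - w by abel]
    _ ≤ f p + L * ‖p - w‖ + ω ‖z - w‖ := by linarith

end InfConv

lemma abs_sub_le_of_le_add {α : Type*} {F : α → ℝ} {B : α → α → ℝ} (hB : ∀ z w, B z w = B w z)
    (h : ∀ z w, F z ≤ F w + B z w) (z w : α) : |F z - F w| ≤ B z w :=
  abs_sub_le_iff.2 ⟨by linarith [h z w], by linarith [h w z, hB z w]⟩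

theorem stmt_15_general (T : ℝ≥0∞) (u : ℝ → ℝ) (ρ : ℝ → ℝ) (A : ℝ)
    (g : ℝ → ℝ → ℝ)
    (hu0 : ∀ t ∈ dbInterval T, 0 < u t)
    (hA : 0 < A)
    (hρgrowth : ∀ x : ℝ, 0 ≤ x → ρ x ≤ A * (1 + x))
    (hg : ∀ t ∈ dbInterval T, ∀ y₁ y₂ : ℝ, |g t y₁ - g t y₂| ≤ u t * ρ |y₁ - y₂|)
    (n : ℕ) :
    ∀ t ∈ dbInterval T, ∀ y : ℝ,
      BddBelow (Set.range fun p : ℝ => g t p + ((n : ℝ) + A) * u t * |p - y|) ∧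
      (⨅ p : ℝ, g t p + ((n : ℝ) + A) * u t * |p - y|) ≤ g t y ∧
      (∀ y' : ℝ,
        |(⨅ p : ℝ, g t p + ((n : ℝ) + A) * u t * |p - y|) -
          (⨅ p : ℝ, g t p + ((n : ℝ) + A) * u t * |p - y'|)| ≤
            ((n : ℝ) + A) * u t * |y - y'|) ∧
      (∀ y' : ℝ,
        |(⨅ p : ℝ, g t p + ((n : ℝ) + A) * u t * |p - y|) -
          (⨅ p : ℝ, g t p + ((n : ℝ) + A) * u t * |p - y'|)| ≤ u t * ρ |y - y'|) := by
  intro t ht y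
  have hut : 0 < u t := hu0 t ht
  have hL : 0 ≤ ((n : ℝ) + A) * u t := by positivity
  have hKL : u t * A ≤ ((n : ℝ) + A) * u t := by nlinarith [(Nat.cast_nonneg n : (0 : ℝ) ≤ n)]
  -- On `ℝ`, `‖x‖` unfolds to `|x|`, so the `infConv` lemmas apply to the statement as written.
  have hbdd : ∀ z : ℝ, BddBelow (Set.range fun p : ℝ => g t p + ((n : ℝ) + A) * u t * ‖p - z‖) :=
    fun z => bddBelow_range_add_mul_norm_sub hKL
      (sub_mul_norm_le_of_modulus_le_linear hut.le hρgrowth (hg t ht) z)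
  have hlip := abs_sub_le_of_le_add (B := fun z w => ((n : ℝ) + A) * u t * ‖z - w‖)
    (fun z w => by rw [norm_sub_rev]) fun z w => infConv_le_add_mul_norm_sub hL (hbdd z) w
  have hmod := abs_sub_le_of_le_add (B := fun z w => u t * ρ ‖z - w‖)
    (fun z w => by rw [norm_sub_rev]) fun z w =>
      infConv_le_add_of_modulus (ω := fun r => u t * ρ r) (hg t ht) (hbdd z) w
  exact ⟨hbdd y, infConv_le_self (hbdd y), hlip y, hmod y⟩

theorem stmt_15 (T : ℝ≥0∞) (hT : 0 < T) (u : ℝ → ℝ) (ρ : ℝ → ℝ) (A : ℝ)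
    (g : ℝ → ℝ → ℝ)
    (hu0 : ∀ t ∈ dbInterval T, 0 < u t)
    (hρc : ContinuousOn ρ (Set.Ici 0))
    (hρmono : MonotoneOn ρ (Set.Ici (0 : ℝ)))
    (hρ0 : ρ 0 = 0) (hρnn : ∀ x : ℝ, 0 ≤ x → 0 ≤ ρ x)
    (hA : 0 < A)
    (hρgrowth : ∀ x : ℝ, 0 ≤ x → ρ x ≤ A * (1 + x))
    (hg : ∀ t ∈ dbInterval T, ∀ y₁ y₂ : ℝ, |g t y₁ - g t y₂| ≤ u t * ρ |y₁ - y₂|)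
    (n : ℕ) :
    ∀ t ∈ dbInterval T, ∀ y : ℝ,
      BddBelow (Set.range fun p : ℝ => g t p + ((n : ℝ) + A) * u t * |p - y|) ∧
      (⨅ p : ℝ, g t p + ((n : ℝ) + A) * u t * |p - y|) ≤ g t y ∧
      (∀ y' : ℝ,
        |(⨅ p : ℝ, g t p + ((n : ℝ) + A) * u t * |p - y|) -
          (⨅ p : ℝ, g t p + ((n : ℝ) + A) * u t * |p - y'|)| ≤
            ((n : ℝ) + A) * u t * |y - y'|) ∧
      (∀ y' : ℝ,
        |(⨅ p : ℝ, g t p + ((n : ℝ) + A) * u t * |p - y|) -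
          (⨅ p : ℝ, g t p + ((n : ℝ) + A) * u t * |p - y'|)| ≤ u t * ρ |y - y'|) :=
  stmt_15_general T u ρ A g hu0 hA hρgrowth hg n
end
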